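/- arXiv:1107.4191 — 4 statements merged into one kernel-verified Lean document; each statement's English description precedes it below -/
import Mathlib

section
/- Conditional negative definiteness of |x| in one dimension: for any real numbers x₀,…,xₙ and any real coefficients v₀,…,vₙ with Σⱼ vⱼ = 0, one has Σⱼ Σₖ vⱼ vₖ |xⱼ − xₖ| ≤ 0. -/
/-!
Shifting the points so that they are nonnegative, `|x - y| = x + y - 2 min x y`. Against
coefficients summing to zero the terms `x + y` cancel, so it suffices that `min` is a positive
semidefinite kernel on `[0, ∞)`; this holds because `min x y = ∫ 𝟙_(0,x] 𝟙_(0,y]`, whence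
`∑ vⱼ vₖ min xⱼ xₖ = ∫ (∑ vⱼ 𝟙_(0,xⱼ])² ≥ 0`.
-/

open MeasureTheory Finset

theorem sum_sum_mul_mul_add_eq_zero {ι R : Type*} [Fintype ι] [CommRing R] (v a b : ι → R)
    (hv : ∑ j, v j = 0) : ∑ j, ∑ k, v j * v k * (a j + b k) = 0 := by
  simp only [mul_add, sum_add_distrib, mul_right_comm (v _) (v _) (a _), ← sum_mul, ← mul_sum,
    mul_assoc, hv, zero_mul, mul_zero, sum_const_zero, add_zero]

theorem sum_sum_mul_mul_integral_mul_nonneg {ι α : Type*} [Fintype ι]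
    [MeasurableSpace α] {μ : Measure α} (v : ι → ℝ) (f : ι → α → ℝ)
    (hf : ∀ j k, Integrable (f j * f k) μ) :
    0 ≤ ∑ j, ∑ k, v j * v k * ∫ t, f j t * f k t ∂μ := by
  have hsq : ∀ t, (∑ j, v j * f j t) ^ 2 = ∑ j, ∑ k, v j * v k * (f j t * f k t) := by
    intro t
    rw [sq, sum_mul_sum]
    exact sum_congr rfl fun j _ => sum_congr rfl fun k _ => by ring
  have hint : ∀ j k, Integrable (fun t => v j * v k * (f j t * f k t)) μ :=
    fun j k => (hf j k).const_mul _
  calc 0 ≤ ∫ t, (∑ j, v j * f j t) ^ 2 ∂μ := integral_nonneg fun t => sq_nonneg _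
    _ = ∑ j, ∑ k, v j * v k * ∫ t, f j t * f k t ∂μ := by
      simp only [hsq]
      rw [integral_finsetSum _ fun j _ => integrable_finsetSum _ fun k _ => hint j k]
      refine sum_congr rfl fun j _ => ?_
      rw [integral_finsetSum _ fun k _ => hint j k]
      exact sum_congr rfl fun k _ => integral_const_mul _ _

theorem integral_indicator_Ioc_mul_indicator_Ioc {a b : ℝ} (ha : 0 ≤ a) (hb : 0 ≤ b) :
    ∫ t, (Set.Ioc 0 a).indicator 1 t * (Set.Ioc 0 b).indicator (1 : ℝ → ℝ) t = min a b := by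
  change ∫ t, ((Set.Ioc 0 a).indicator 1 * (Set.Ioc 0 b).indicator 1 : ℝ → ℝ) t = _
  rw [← Set.inter_indicator_one, Set.Ioc_inter_Ioc, max_self,
    integral_indicator_one measurableSet_Ioc, Real.volume_real_Ioc_of_le (le_min ha hb), sub_zero]

theorem sum_sum_mul_mul_min_nonneg {ι : Type*} [Fintype ι] (v x : ι → ℝ)
    (hx : ∀ j, 0 ≤ x j) :
    0 ≤ ∑ j, ∑ k, v j * v k * min (x j) (x k) := by
  have hf : ∀ j k, Integrable
      ((Set.Ioc 0 (x j)).indicator 1 * (Set.Ioc 0 (x k)).indicator (1 : ℝ → ℝ)) := by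
    intro j k
    rw [← Set.inter_indicator_one,
      integrable_indicator_iff (measurableSet_Ioc.inter measurableSet_Ioc)]
    exact integrableOn_const (measure_inter_lt_top_of_left_ne_top measure_Ioc_lt_top.ne).ne
  simpa only [integral_indicator_Ioc_mul_indicator_Ioc (hx _) (hx _)] using
    sum_sum_mul_mul_integral_mul_nonneg v (fun j => (Set.Ioc 0 (x j)).indicator 1) hf

theorem sum_sum_mul_mul_abs_sub_nonpos {ι : Type*} [Fintype ι] (x v : ι → ℝ)
    (hv : ∑ j, v j = 0) : ∑ j, ∑ k, v j * v k * |x j - x k| ≤ 0 := by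
  obtain ⟨m, hm⟩ := (Set.finite_range x).bddBelow
  set y := fun j => x j - m
  have hy : ∀ j, 0 ≤ y j := fun j => sub_nonneg.2 (hm ⟨j, rfl⟩)
  have habs : ∀ j k, |x j - x k| = (y j + y k) - 2 * min (y j) (y k) := fun j k => by
    rw [show x j - x k = y j - y k by simp [y]]
    linarith [min_add_max (y j) (y k), max_sub_min_eq_abs' (y j) (y k)]
  have hsplit : ∑ j, ∑ k, v j * v k * |x j - x k|
      = ∑ j, ∑ k, v j * v k * (y j + y k) - 2 * ∑ j, ∑ k, v j * v k * min (y j) (y k) := by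
    simp only [mul_sum, ← sum_sub_distrib, habs]
    exact sum_congr rfl fun j _ => sum_congr rfl fun k _ => by ring
  rw [hsplit, sum_sum_mul_mul_add_eq_zero v y y hv]
  linarith [sum_sum_mul_mul_min_nonneg v y hy]

theorem abs_conditionally_negative_definite (n : ℕ) (xs : Fin (n+1) → ℝ)
    (v : Fin (n+1) → ℝ) (hv : ∑ j, v j = 0) :
    ∑ j, ∑ k, v j * v k * |xs j - xs k| ≤ 0 :=
  sum_sum_mul_mul_abs_sub_nonpos xs v hv
end

section
/- Identity for the conditionally negative quadratic form of |x|: for real numbers x₀,…,xₙ and coefficients v₀,…,vₙ with Σⱼ vⱼ = 0, one has Σⱼ Σₖ vⱼ vₖ |xⱼ − xₖ| = −2 ∫_ℝ (Σⱼ vⱼ 1_{(−∞, xⱼ]}(u))² du, where 1_A denotes the indicator function of the set A. -/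
/-!
Since `∑ j, v j = 0`, expanding the square gives, for any reals `f j`,
`∑ j, ∑ k, v j * v k * (f j - f k) ^ 2 = -2 * (∑ j, v j * f j) ^ 2`.
Apply this pointwise with `f j = 1_{(-∞, xs j]}(u)` and integrate: the square of a difference
of two such indicators is the indicator of the interval between `xs j` and `xs k`, whose length
is `|xs j - xs k|`.
-/

open MeasureTheory Set

theorem Finset.sum_sum_mul_mul_sub_sq_of_sum_eq_zero {ι R : Type*} [CommRing R] (s : Finset ι)
    (v f : ι → R) (hv : ∑ i ∈ s, v i = 0) :
    ∑ j ∈ s, ∑ k ∈ s, v j * v k * (f j - f k) ^ 2 = -2 * (∑ j ∈ s, v j * f j) ^ 2 := by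
  calc ∑ j ∈ s, ∑ k ∈ s, v j * v k * (f j - f k) ^ 2
      = ∑ j ∈ s, ∑ k ∈ s, (v j * f j ^ 2 * v k + v j * (v k * f k ^ 2)
          - 2 * (v j * f j * (v k * f k))) := by
        refine Finset.sum_congr rfl fun j _ => Finset.sum_congr rfl fun k _ => ?_
        ring
    _ = (∑ j ∈ s, v j * f j ^ 2) * ∑ k ∈ s, v k + (∑ j ∈ s, v j) * ∑ k ∈ s, v k * f k ^ 2
          - 2 * ((∑ j ∈ s, v j * f j) * ∑ k ∈ s, v k * f k) := by
        simp only [Finset.sum_add_distrib, Finset.sum_sub_distrib, ← Finset.mul_sum,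
          ← Finset.sum_mul]
    _ = -2 * (∑ j ∈ s, v j * f j) ^ 2 := by
        rw [hv]
        ring

lemma sq_indicator_Iic_sub_indicator_Iic (a b u : ℝ) :
    (indicator (Iic a) (fun _ => (1 : ℝ)) u - indicator (Iic b) (fun _ => (1 : ℝ)) u) ^ 2
      = indicator (Ioc (min a b) (max a b)) (fun _ => (1 : ℝ)) u := by
  simp only [indicator_apply, mem_Iic, mem_Ioc, min_lt_iff, le_max_iff]
  split_ifs <;> grind

lemma integrable_sq_indicator_Iic_sub_indicator_Iic (a b : ℝ) :
    Integrable fun u =>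
      (indicator (Iic a) (fun _ => (1 : ℝ)) u - indicator (Iic b) (fun _ => (1 : ℝ)) u) ^ 2 := by
  simp only [sq_indicator_Iic_sub_indicator_Iic]
  exact (integrableOn_const measure_Ioc_lt_top.ne).integrable_indicator measurableSet_Ioc

lemma integral_sq_indicator_Iic_sub_indicator_Iic (a b : ℝ) :
    ∫ u, (indicator (Iic a) (fun _ => (1 : ℝ)) u - indicator (Iic b) (fun _ => (1 : ℝ)) u) ^ 2
      = |a - b| := by
  simp only [sq_indicator_Iic_sub_indicator_Iic]
  rw [integral_indicator_const _ measurableSet_Ioc, measureReal_def, Real.volume_Ioc,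
    ENNReal.toReal_ofReal (sub_nonneg.2 min_le_max), max_sub_min_eq_abs, abs_sub_comm,
    smul_eq_mul, mul_one]

theorem abs_quadratic_form_identity (n : ℕ) (xs : Fin (n+1) → ℝ)
    (v : Fin (n+1) → ℝ) (hv : ∑ j, v j = 0) :
    ∑ j, ∑ k, v j * v k * |xs j - xs k|
      = -2 * ∫ u : ℝ, (∑ j, v j * Set.indicator (Set.Iic (xs j)) (fun _ => (1:ℝ)) u) ^ 2 := by
  set D : Fin (n + 1) → Fin (n + 1) → ℝ → ℝ := fun j k u =>
    (indicator (Iic (xs j)) (fun _ => (1 : ℝ)) u - indicator (Iic (xs k)) (fun _ => (1 : ℝ)) u) ^ 2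
  have hpointwise : ∀ u, (∑ j, v j * indicator (Iic (xs j)) (fun _ => (1 : ℝ)) u) ^ 2
      = -(1 / 2) * ∑ j, ∑ k, v j * v k * D j k u := fun u => by
    rw [Finset.sum_sum_mul_mul_sub_sq_of_sum_eq_zero _ _ _ hv]
    ring
  have hintegrable : ∀ j k, Integrable (fun u => v j * v k * D j k u) := fun j k =>
    (integrable_sq_indicator_Iic_sub_indicator_Iic _ _).const_mul _
  simp only [hpointwise]
  rw [integral_const_mul,
    integral_finsetSum _ fun j _ => integrable_finsetSum _ fun k _ => hintegrable j k]
  simp only [integral_finsetSum _ fun k _ => hintegrable _ k, integral_const_mul, D,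
    integral_sq_indicator_Iic_sub_indicator_Iic]
  ring
end

section
/- Plancherel identity for the mixed power function with μ = 3: under the hypotheses of the previous statement (nodes in [0,1], Σⱼ cⱼ = 1, Σⱼ cⱼ xⱼ = x ∈ [0,1]), with Θ(t) = e^{ixt} − Σⱼ cⱼ e^{i xⱼ t} and K(u) = (x-u)_+ − Σⱼ cⱼ (xⱼ-u)_+, one has ∫_ℝ |Θ(t)|² / t⁴ dt = 2π ∫₀¹ K(u)² du. -/
/-!
`K` is the Peano kernel of the functional `L f = f x - ∑ j, c j * f (xs j)`, which annihilates
affine functions. Applying `L` to Taylor's formula with integral remainder,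
`e^{iyt} = 1 + iyt + (it)² ∫₀¹ (y - u)₊ e^{iut} du` for `y ∈ [0, 1]`, gives `Θ(t) = (it)² K̂(t)`
with `K̂(t) = ∫₀¹ K(u) e^{iut} du`, the Fourier transform of `K` since `K` vanishes off `(0, 1)`.
Hence `|Θ(t)|² / t⁴ = |K̂(t)|²`, and Plancherel gives the claim. Plancherel applies because `K̂`
is bounded and, `Θ` being bounded, `O(t⁻²)`, hence integrable.
-/

open MeasureTheory Real Complex FourierTransform Set InnerProductSpace

section Plancherel

variable {V H : Type*} [NormedAddCommGroup V] [InnerProductSpace ℝ V] [FiniteDimensional ℝ V]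
  [MeasurableSpace V] [BorelSpace V]
  [NormedAddCommGroup H] [InnerProductSpace ℂ H] [CompleteSpace H]

theorem Continuous.integral_norm_sq_fourier {f : V → H} (hc : Continuous f) (hf : Integrable f)
    (hf' : Integrable (𝓕 f)) : ∫ ξ, ‖𝓕 f ξ‖ ^ 2 = ∫ x, ‖f x‖ ^ 2 := by
  have h := VectorFourier.integral_sesq_fourierIntegral_eq_neg_flip (innerSL ℂ)
    (L := innerₗ V) continuous_fourierChar continuous_inner hf hf'
  rw [flip_innerₗ] at h
  change ∫ ξ, ⟪𝓕 f ξ, 𝓕 f ξ⟫_ℂ = ∫ x, ⟪f x, 𝓕⁻ (𝓕 f) x⟫_ℂ at h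
  apply Complex.ofRealLI.injective
  simpa [← LinearIsometry.integral_comp_comm, inner_self_eq_norm_sq_to_K,
    hc.fourierInv_fourier_eq hf hf'] using h

end Plancherel

theorem MeasureTheory.Integrable.integrable_fourier_of_sq_mul_norm_le {E : Type*}
    [NormedAddCommGroup E] [NormedSpace ℂ E] {f : ℝ → E} (hf : Integrable f) {C : ℝ}
    (h : ∀ ξ, ξ ^ 2 * ‖𝓕 f ξ‖ ≤ C) : Integrable (𝓕 f) := by
  refine (integrable_inv_one_add_sq.const_mul ((∫ v, ‖f v‖) + C)).mono'
    (VectorFourier.fourierIntegral_continuous continuous_fourierChar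
      continuous_inner hf).aestronglyMeasurable (ae_of_all _ fun ξ => ?_)
  have hbound : ‖𝓕 f ξ‖ ≤ ∫ v, ‖f v‖ :=
    VectorFourier.norm_fourierIntegral_le_integral_norm 𝐞 volume (innerₗ ℝ) f ξ
  rw [← div_eq_mul_inv, le_div_iff₀ (by positivity)]
  calc ‖𝓕 f ξ‖ * (1 + ξ ^ 2) = ‖𝓕 f ξ‖ + ξ ^ 2 * ‖𝓕 f ξ‖ := by ring
    _ ≤ _ := add_le_add hbound (h ξ)

theorem fourier_neg_div_two_pi_eq_intervalIntegral {f : ℝ → ℂ} {a b : ℝ}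
    (hf : Function.support f ⊆ Ioc a b) (t : ℝ) :
    𝓕 f (-t / (2 * π)) = ∫ u in a..b, f u * cexp (I * u * t) := by
  rw [intervalIntegral.integral_eq_integral_of_support_subset
    ((Function.support_mul_subset_left _ _).trans hf), Real.fourier_real_eq_integral_exp_smul]
  congr 1 with u
  rw [smul_eq_mul, mul_comm]
  congr 2
  push_cast
  field_simp

theorem sq_I_mul_integral_sub_mul_cexp (y t : ℝ) :
    (I * t) ^ 2 * ∫ u in (0:ℝ)..y, ((y - u : ℝ) : ℂ) * cexp (I * u * t)
      = cexp (I * y * t) - 1 - I * y * t := by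
  rcases eq_or_ne t 0 with rfl | ht
  · simp
  have htc : (t : ℂ) ≠ 0 := by exact_mod_cast ht
  have hderiv (u : ℝ) : HasDerivAt
      (fun u : ℝ => ((y - u : ℝ) : ℂ) * cexp (I * u * t) / (I * t) + cexp (I * u * t) / (I * t) ^ 2)
      (((y - u : ℝ) : ℂ) * cexp (I * u * t)) u := by
    have hexp : HasDerivAt (fun u : ℝ => cexp (I * u * t)) (cexp (I * u * t) * (I * t)) u := by
      have hlin : HasDerivAt (fun u : ℝ => I * u * t) (I * t) u := by
        simpa using ((hasDerivAt_id u).ofReal_comp.const_mul I).mul_const (t : ℂ)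
      exact hlin.cexp
    have hlin : HasDerivAt (fun u : ℝ => ((y - u : ℝ) : ℂ)) (-1) u := by
      simpa using ((hasDerivAt_id u).const_sub y).ofReal_comp
    refine (((hlin.mul hexp).div_const (I * t)).add (hexp.div_const ((I * t) ^ 2))).congr_deriv ?_
    field_simp
    ring
  rw [intervalIntegral.integral_eq_sub_of_hasDerivAt (fun u _ => hderiv u)
    (Continuous.intervalIntegrable (by fun_prop) _ _)]
  push_cast
  simp only [sub_self, mul_zero, zero_mul, Complex.exp_zero]
  field_simp
  ring

theorem intervalIntegral_max_sub_mul {a b y : ℝ} (hay : a ≤ y) (hyb : y ≤ b) {g : ℝ → ℂ}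
    (hg : Continuous g) :
    ∫ u in a..b, ((max (y - u) 0 : ℝ) : ℂ) * g u = ∫ u in a..y, ((y - u : ℝ) : ℂ) * g u := by
  have hint (p q : ℝ) :
      IntervalIntegrable (fun u => ((max (y - u) 0 : ℝ) : ℂ) * g u) volume p q :=
    Continuous.intervalIntegrable (by fun_prop) p q
  have hleft : EqOn (fun u => ((max (y - u) 0 : ℝ) : ℂ) * g u)
      (fun u => ((y - u : ℝ) : ℂ) * g u) (uIcc a y) := by
    intro u hu
    rw [uIcc_of_le hay] at hu
    simp only [max_eq_left (sub_nonneg.mpr hu.2)]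
  have hright : EqOn (fun u => ((max (y - u) 0 : ℝ) : ℂ) * g u) 0 (uIcc y b) := by
    intro u hu
    rw [uIcc_of_le hyb] at hu
    simp [max_eq_right (sub_nonpos.mpr hu.1)]
  rw [← intervalIntegral.integral_add_adjacent_intervals (hint a y) (hint y b),
    intervalIntegral.integral_congr hleft, intervalIntegral.integral_congr hright]
  simp

theorem sq_I_mul_integral_max_sub_mul_cexp {y : ℝ} (hy : y ∈ Icc (0 : ℝ) 1) (t : ℝ) :
    (I * t) ^ 2 * ∫ u in (0:ℝ)..1, ((max (y - u) 0 : ℝ) : ℂ) * cexp (I * u * t)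
      = cexp (I * y * t) - 1 - I * y * t := by
  rw [intervalIntegral_max_sub_mul hy.1 hy.2 (by fun_prop), sq_I_mul_integral_sub_mul_cexp]

section PeanoKernel

variable {ι : Type*} [Fintype ι] {x : ℝ} {xs c : ι → ℝ}

def peanoKernel (x : ℝ) (xs c : ι → ℝ) (u : ℝ) : ℝ :=
  max (x - u) 0 - ∑ j, c j * max (xs j - u) 0

theorem continuous_peanoKernel : Continuous (peanoKernel x xs c) := by
  unfold peanoKernel
  fun_prop

theorem support_peanoKernel_subset (hxs : ∀ j, xs j ∈ Icc (0:ℝ) 1) (hx : x ∈ Icc (0:ℝ) 1)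
    (hc1 : ∑ j, c j = 1) (hcx : ∑ j, c j * xs j = x) :
    Function.support (peanoKernel x xs c) ⊆ Ioo 0 1 := by
  intro u hu
  refine ⟨lt_of_not_ge fun hu0 => hu ?_, lt_of_not_ge fun hu1 => hu ?_⟩
  · have hpos (j : ι) : max (xs j - u) 0 = xs j - u := max_eq_left (by linarith [(hxs j).1])
    simp only [peanoKernel, max_eq_left (by linarith [hx.1] : 0 ≤ x - u), hpos, mul_sub,
      Finset.sum_sub_distrib, ← Finset.sum_mul, hc1, hcx]
    ring
  · have hzero (j : ι) : max (xs j - u) 0 = 0 := max_eq_right (by linarith [(hxs j).2])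
    simp [peanoKernel, max_eq_right (by linarith [hx.2] : x - u ≤ 0), hzero]

theorem hasCompactSupport_peanoKernel (hxs : ∀ j, xs j ∈ Icc (0:ℝ) 1) (hx : x ∈ Icc (0:ℝ) 1)
    (hc1 : ∑ j, c j = 1) (hcx : ∑ j, c j * xs j = x) :
    HasCompactSupport (peanoKernel x xs c) :=
  HasCompactSupport.intro isCompact_Icc fun _ hu => Function.notMem_support.mp fun h =>
    hu (Ioo_subset_Icc_self (support_peanoKernel_subset hxs hx hc1 hcx h))

theorem intervalIntegral_peanoKernel_mul {a b : ℝ} {g : ℝ → ℂ} (hg : Continuous g) :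
    ∫ u in a..b, (peanoKernel x xs c u : ℂ) * g u
      = (∫ u in a..b, ((max (x - u) 0 : ℝ) : ℂ) * g u)
        - ∑ j, (c j : ℂ) * ∫ u in a..b, ((max (xs j - u) 0 : ℝ) : ℂ) * g u := by
  have hint (y : ℝ) :
      IntervalIntegrable (fun u => ((max (y - u) 0 : ℝ) : ℂ) * g u) volume a b :=
    Continuous.intervalIntegrable (by fun_prop) a b
  simp_rw [← intervalIntegral.integral_const_mul]
  rw [← intervalIntegral.integral_finsetSum fun j _ => (hint (xs j)).const_mul _,
    ← intervalIntegral.integral_sub (hint x) (Continuous.intervalIntegrable (by fun_prop) a b)]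
  congr 1 with u
  simp [peanoKernel, sub_mul, Finset.sum_mul, mul_assoc]

theorem cexp_sub_sum_eq_fourier_peanoKernel (hxs : ∀ j, xs j ∈ Icc (0:ℝ) 1)
    (hx : x ∈ Icc (0:ℝ) 1) (hc1 : ∑ j, c j = 1) (hcx : ∑ j, c j * xs j = x) (t : ℝ) :
    cexp (I * x * t) - ∑ j, (c j : ℂ) * cexp (I * xs j * t)
      = (I * t) ^ 2 * 𝓕 (fun u => (peanoKernel x xs c u : ℂ)) (-t / (2 * π)) := by
  have hsupp : Function.support (fun u => (peanoKernel x xs c u : ℂ)) ⊆ Ioc 0 1 :=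
    fun u hu => Ioo_subset_Ioc_self (support_peanoKernel_subset hxs hx hc1 hcx (by simpa using hu))
  have hc1' : ∑ j, (c j : ℂ) = 1 := by exact_mod_cast hc1
  have hcx' : ∑ j, (c j : ℂ) * (I * xs j * t) = I * x * t := by
    rw [← hcx, Complex.ofReal_sum, Finset.mul_sum, Finset.sum_mul]
    exact Finset.sum_congr rfl fun j _ => by push_cast; ring
  rw [fourier_neg_div_two_pi_eq_intervalIntegral hsupp,
    intervalIntegral_peanoKernel_mul (by fun_prop), mul_sub, Finset.mul_sum]
  simp only [mul_left_comm _ (c _ : ℂ), sq_I_mul_integral_max_sub_mul_cexp hx,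
    sq_I_mul_integral_max_sub_mul_cexp (hxs _), mul_sub, Finset.sum_sub_distrib, mul_one, hc1',
    hcx']
  ring

theorem norm_cexp_sub_sum_le (x : ℝ) (xs c : ι → ℝ) (t : ℝ) :
    ‖cexp (I * x * t) - ∑ j, (c j : ℂ) * cexp (I * xs j * t)‖ ≤ 1 + ∑ j, |c j| := by
  have hunit (y : ℝ) : ‖cexp (I * y * t)‖ = 1 := by
    rw [Complex.norm_exp]
    simp
  refine (norm_sub_le _ _).trans (add_le_add (hunit x).le ((norm_sum_le _ _).trans ?_))
  simp [hunit]

theorem sq_mul_norm_fourier_peanoKernel_le (hxs : ∀ j, xs j ∈ Icc (0:ℝ) 1)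
    (hx : x ∈ Icc (0:ℝ) 1) (hc1 : ∑ j, c j = 1) (hcx : ∑ j, c j * xs j = x) (ξ : ℝ) :
    ξ ^ 2 * ‖𝓕 (fun u => (peanoKernel x xs c u : ℂ)) ξ‖ ≤ (1 + ∑ j, |c j|) / (2 * π) ^ 2 := by
  have h := cexp_sub_sum_eq_fourier_peanoKernel hxs hx hc1 hcx (-(2 * π * ξ)) ▸
    norm_cexp_sub_sum_le x xs c (-(2 * π * ξ))
  rw [show -(-(2 * π * ξ) : ℝ) / (2 * π) = ξ by field_simp] at h
  simp only [norm_mul, norm_pow, Complex.norm_I, Complex.norm_real, Real.norm_eq_abs, one_mul,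
    sq_abs] at h
  rw [le_div_iff₀ (by positivity)]
  linear_combination h

end PeanoKernel

theorem plancherel_mixed_power_mu3 (n : ℕ) (x : ℝ) (xs : Fin (n+1) → ℝ)
    (c : Fin (n+1) → ℝ)
    (hxs : ∀ j, xs j ∈ Set.Icc (0:ℝ) 1) (hx : x ∈ Set.Icc (0:ℝ) 1)
    (hc1 : ∑ j, c j = 1) (hcx : ∑ j, c j * xs j = x) :
    (∫ t : ℝ, ‖Complex.exp (Complex.I * x * t)
        - ∑ j, (c j : ℂ) * Complex.exp (Complex.I * xs j * t)‖ ^ 2 / t ^ 4)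
      = 2 * Real.pi * ∫ u in (0:ℝ)..1,
          (max (x - u) 0 - ∑ j, c j * max (xs j - u) 0) ^ 2 := by
  have hsupp := support_peanoKernel_subset hxs hx hc1 hcx
  have hΘ := cexp_sub_sum_eq_fourier_peanoKernel hxs hx hc1 hcx
  have hdecay := sq_mul_norm_fourier_peanoKernel_le hxs hx hc1 hcx
  set K : ℝ → ℂ := fun u => (peanoKernel x xs c u : ℂ)
  have hK : Continuous K := continuous_ofReal.comp continuous_peanoKernel
  have hKint : Integrable K := hK.integrable_of_hasCompactSupport
    ((hasCompactSupport_peanoKernel hxs hx hc1 hcx).comp_left ofReal_zero)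
  have hFint := hKint.integrable_fourier_of_sq_mul_norm_le hdecay
  calc _ = ∫ t : ℝ, ‖𝓕 K (-t / (2 * π))‖ ^ 2 := by
        refine integral_congr_ae ?_
        filter_upwards [compl_mem_ae_iff.mpr (measure_singleton (0:ℝ))] with t ht
        have ht : t ≠ 0 := ht
        rw [hΘ t, norm_mul, norm_pow, norm_mul, Complex.norm_I, Complex.norm_real,
          Real.norm_eq_abs, one_mul, mul_pow, sq_abs, ← pow_mul]
        field_simp
    _ = 2 * π * ∫ ξ, ‖𝓕 K ξ‖ ^ 2 := by
        simp_rw [neg_div]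
        rw [Measure.integral_comp_div (fun ξ => ‖𝓕 K (-ξ)‖ ^ 2),
          integral_neg_eq_self (fun ξ => ‖𝓕 K ξ‖ ^ 2), abs_of_pos two_pi_pos, smul_eq_mul]
    _ = 2 * π * ∫ u, ‖K u‖ ^ 2 := by rw [hK.integral_norm_sq_fourier hKint hFint]
    _ = _ := by
        rw [intervalIntegral.integral_eq_integral_of_support_subset
          fun u hu => Ioo_subset_Ioc_self (hsupp (by simpa [peanoKernel] using hu))]
        simp only [K, Complex.norm_real, Real.norm_eq_abs, sq_abs]
        rfl
end

section
/- Explicit quadratic-form expression of the L² Peano kernel norm: under the reproduction hypotheses (xⱼ ∈ [0,1], Σⱼ cⱼ = 1, Σⱼ cⱼ xⱼ = x ∈ [0,1]), one has ∫₀¹ K(u)² du = (1/12)(Σⱼ Σₖ cⱼ cₖ |xⱼ − xₖ|³ − 2 Σⱼ cⱼ |x − xⱼ|³), where K(u) = (x-u)_+ − Σⱼ cⱼ (xⱼ-u)_+. -/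
open intervalIntegral

private lemma cont_max (a : ℝ) : Continuous (fun u : ℝ => max (a - u) 0) :=
  (continuous_const.sub continuous_id).max continuous_const

private lemma key_le {a b : ℝ} (ha : 0 ≤ a) (hab : a ≤ b) (hb : b ≤ 1) :
    (∫ u in (0:ℝ)..1, max (a - u) 0 * max (b - u) 0)
      = (|a - b| ^ 3 - a ^ 3 - b ^ 3 + 3 * a ^ 2 * b + 3 * a * b ^ 2) / 12 := by
  have ha1 : a ≤ 1 := hab.trans hb
  have hint : ∀ p q : ℝ, IntervalIntegrable
      (fun u : ℝ => max (a - u) 0 * max (b - u) 0) MeasureTheory.volume p q :=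
    fun p q => ((cont_max a).mul (cont_max b)).intervalIntegrable p q
  rw [← integral_add_adjacent_intervals (b := a) (hint 0 a) (hint a 1)]
  have h1 : (∫ u in (0:ℝ)..a, max (a - u) 0 * max (b - u) 0)
      = ∫ u in (0:ℝ)..a, (u ^ 2 - (a + b) * u + a * b) := by
    apply integral_congr
    intro u hu
    rw [Set.uIcc_of_le ha] at hu
    have h1 : a - u ≥ 0 := sub_nonneg.mpr hu.2
    have h2 : b - u ≥ 0 := sub_nonneg.mpr (hu.2.trans hab)
    simp only [max_eq_left h1, max_eq_left h2]; ring
  have h2 : (∫ u in a..(1:ℝ), max (a - u) 0 * max (b - u) 0) = 0 := by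
    have : (∫ u in a..(1:ℝ), max (a - u) 0 * max (b - u) 0) = ∫ u in a..(1:ℝ), (0:ℝ) := by
      apply integral_congr
      intro u hu
      rw [Set.uIcc_of_le ha1] at hu
      simp only [max_eq_right (sub_nonpos.mpr hu.1), zero_mul]
    rw [this, integral_zero]
  rw [h1, h2, add_zero]
  have hib : ∀ (f g : ℝ → ℝ) (p q : ℝ), Continuous f → Continuous g → True := fun _ _ _ _ _ _ => trivial
  rw [integral_add, integral_sub]
  · rw [integral_pow, integral_const_mul, integral_id, integral_const]
    rw [abs_of_nonpos (by linarith)]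
    simp [smul_eq_mul]
    ring
  · exact (continuous_pow 2).intervalIntegrable 0 a
  · exact (continuous_const.mul continuous_id).intervalIntegrable 0 a
  · exact ((continuous_pow 2).sub (continuous_const.mul continuous_id)).intervalIntegrable 0 a
  · exact continuous_const.intervalIntegrable 0 a

private lemma key {a b : ℝ} (ha : a ∈ Set.Icc (0:ℝ) 1) (hb : b ∈ Set.Icc (0:ℝ) 1) :
    (∫ u in (0:ℝ)..1, max (a - u) 0 * max (b - u) 0)
      = (|a - b| ^ 3 - a ^ 3 - b ^ 3 + 3 * a ^ 2 * b + 3 * a * b ^ 2) / 12 := by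
  rcases le_total a b with h | h
  · exact key_le ha.1 h hb.2
  · have := key_le hb.1 h ha.2
    simp_rw [mul_comm (max (a - _) 0)] at this ⊢
    rw [this, abs_sub_comm]; ring
set_option maxHeartbeats 1600000 in
theorem peano_L2_norm_quadratic_form (n : ℕ) (x : ℝ) (xs : Fin (n+1) → ℝ)
    (c : Fin (n+1) → ℝ)
    (hxs : ∀ j, xs j ∈ Set.Icc (0:ℝ) 1) (hx : x ∈ Set.Icc (0:ℝ) 1)
    (hc1 : ∑ j, c j = 1) (hcx : ∑ j, c j * xs j = x) :
    (∫ u in (0:ℝ)..1, (max (x - u) 0 - ∑ j, c j * max (xs j - u) 0) ^ 2)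
      = (1 / 12) * ((∑ j, ∑ k, c j * c k * |xs j - xs k| ^ 3)
          - 2 * ∑ j, c j * |x - xs j| ^ 3) := by
  -- pointwise expansion of the square into a double sum
  have hpt : ∀ u : ℝ, (max (x - u) 0 - ∑ j, c j * max (xs j - u) 0) ^ 2
      = ∑ j, ∑ k, (c j * c k) *
        ((max (x - u) 0 - max (xs j - u) 0) * (max (x - u) 0 - max (xs k - u) 0)) := by
    intro u
    have h : max (x - u) 0 - ∑ j, c j * max (xs j - u) 0
        = ∑ j, c j * (max (x - u) 0 - max (xs j - u) 0) := by
      simp_rw [mul_sub, Finset.sum_sub_distrib, ← Finset.sum_mul, hc1, one_mul]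
    rw [h, sq, Finset.sum_mul_sum]
    refine Finset.sum_congr rfl fun j _ => Finset.sum_congr rfl fun k _ => by ring
  simp_rw [hpt]
  -- the cross integral
  have cross : ∀ a b : ℝ, a ∈ Set.Icc (0:ℝ) 1 → b ∈ Set.Icc (0:ℝ) 1 →
      (∫ u in (0:ℝ)..1, (max (x - u) 0 - max (a - u) 0) * (max (x - u) 0 - max (b - u) 0))
        = (|a - b| ^ 3 - |x - a| ^ 3 - |x - b| ^ 3 + 6 * x ^ 3
            - 3 * x ^ 2 * (a + b) - 3 * x * (a ^ 2 + b ^ 2) + 3 * a * b * (a + b)) / 12 := by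
    intro a b ha hb
    have hmm : ∀ p q : ℝ, IntervalIntegrable
        (fun u : ℝ => max (p - u) 0 * max (q - u) 0) MeasureTheory.volume 0 1 :=
      fun p q => ((cont_max p).mul (cont_max q)).intervalIntegrable 0 1
    have hexp : ∀ u : ℝ, (max (x - u) 0 - max (a - u) 0) * (max (x - u) 0 - max (b - u) 0)
        = max (x - u) 0 * max (x - u) 0 - max (x - u) 0 * max (b - u) 0
          - max (a - u) 0 * max (x - u) 0 + max (a - u) 0 * max (b - u) 0 := fun u => by ring
    simp_rw [hexp]
    rw [intervalIntegral.integral_add (((hmm x x).sub (hmm x b)).sub (hmm a x)) (hmm a b),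
        intervalIntegral.integral_sub ((hmm x x).sub (hmm x b)) (hmm a x),
        intervalIntegral.integral_sub (hmm x x) (hmm x b),
        key hx hx, key hx hb, key ha hx, key ha hb]
    rw [sub_self x, abs_zero, abs_sub_comm a x]
    ring
  -- integrate the double sum
  have hint1 : ∀ (j k : Fin (n+1)), IntervalIntegrable
      (fun u : ℝ => (c j * c k) *
        ((max (x - u) 0 - max (xs j - u) 0) * (max (x - u) 0 - max (xs k - u) 0)))
      MeasureTheory.volume 0 1 := by
    intro j k
    exact (continuous_const.mul (((cont_max x).sub (cont_max (xs j))).mul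
      ((cont_max x).sub (cont_max (xs k))))).intervalIntegrable 0 1
  have hcont2 : ∀ j : Fin (n+1), Continuous (fun u : ℝ => ∑ k, (c j * c k) *
      ((max (x - u) 0 - max (xs j - u) 0) * (max (x - u) 0 - max (xs k - u) 0))) := by
    intro j
    exact continuous_finset_sum _ fun k _ => continuous_const.mul
      (((cont_max x).sub (cont_max (xs j))).mul ((cont_max x).sub (cont_max (xs k))))
  rw [intervalIntegral.integral_finset_sum (μ := MeasureTheory.volume)
    (f := fun j (u : ℝ) => ∑ k, (c j * c k) *
      ((max (x - u) 0 - max (xs j - u) 0) * (max (x - u) 0 - max (xs k - u) 0)))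
    (fun j _ => (hcont2 j).intervalIntegrable 0 1)]
  have step : ∀ j : Fin (n+1), (∫ u in (0:ℝ)..1, ∑ k, (c j * c k) *
        ((max (x - u) 0 - max (xs j - u) 0) * (max (x - u) 0 - max (xs k - u) 0)))
      = ∑ k, (c j * c k) * ((|xs j - xs k| ^ 3 - |x - xs j| ^ 3 - |x - xs k| ^ 3 + 6 * x ^ 3
            - 3 * x ^ 2 * (xs j + xs k) - 3 * x * ((xs j) ^ 2 + (xs k) ^ 2)
            + 3 * xs j * xs k * (xs j + xs k)) / 12) := by
    intro j
    rw [intervalIntegral.integral_finset_sum (μ := MeasureTheory.volume) (fun k _ => hint1 j k)]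
    refine Finset.sum_congr rfl fun k _ => ?_
    rw [intervalIntegral.integral_const_mul, cross (xs j) (xs k) (hxs j) (hxs k)]
  simp_rw [step]
  -- now pure algebra with the reproduction identities
  set s2 : ℝ := ∑ k, c k * (xs k) ^ 2 with hs2
  have inner : ∀ j : Fin (n+1), ∑ k, (c j * c k) *
      ((|xs j - xs k| ^ 3 - |x - xs j| ^ 3 - |x - xs k| ^ 3 + 6 * x ^ 3
        - 3 * x ^ 2 * (xs j + xs k) - 3 * x * ((xs j) ^ 2 + (xs k) ^ 2)
        + 3 * xs j * xs k * (xs j + xs k)) / 12)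
    = (c j * (∑ k, c k * |xs j - xs k| ^ 3) - c j * |x - xs j| ^ 3
        - c j * (∑ k, c k * |x - xs k| ^ 3) + c j * (6 * x ^ 3)
        - c j * (3 * x ^ 2 * (xs j + x)) - c j * (3 * x * ((xs j) ^ 2 + s2))
        + c j * (3 * xs j * ((xs j) * x + s2))) / 12 := by
    intro j
    have hptk : ∀ k : Fin (n+1), (c j * c k) *
        ((|xs j - xs k| ^ 3 - |x - xs j| ^ 3 - |x - xs k| ^ 3 + 6 * x ^ 3
          - 3 * x ^ 2 * (xs j + xs k) - 3 * x * ((xs j) ^ 2 + (xs k) ^ 2)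
          + 3 * xs j * xs k * (xs j + xs k)) / 12)
      = (c j * (c k * |xs j - xs k| ^ 3) - c j * |x - xs j| ^ 3 * c k
          - c j * (c k * |x - xs k| ^ 3) + c j * (6 * x ^ 3) * c k
          - c j * (3 * x ^ 2) * (xs j * c k + c k * xs k)
          - c j * (3 * x) * ((xs j) ^ 2 * c k + c k * (xs k) ^ 2)
          + c j * (3 * xs j) * ((xs j) * (c k * xs k) + c k * (xs k) ^ 2)) / 12 := fun k => by
      ring
    simp only [hptk]
    rw [← Finset.sum_div]
    congr 1
    simp only [Finset.sum_add_distrib, Finset.sum_sub_distrib, ← Finset.mul_sum,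
      ← Finset.sum_mul, hc1, hcx]
    ring
  simp_rw [inner]
  have A1 := hc1
  -- sum over j
  have houter : ∀ j : Fin (n+1),
      (c j * (∑ k, c k * |xs j - xs k| ^ 3) - c j * |x - xs j| ^ 3
        - c j * (∑ k, c k * |x - xs k| ^ 3) + c j * (6 * x ^ 3)
        - c j * (3 * x ^ 2 * (xs j + x)) - c j * (3 * x * ((xs j) ^ 2 + s2))
        + c j * (3 * xs j * ((xs j) * x + s2))) / 12
    = (c j * (∑ k, c k * |xs j - xs k| ^ 3) - c j * |x - xs j| ^ 3
        - c j * (∑ k, c k * |x - xs k| ^ 3) + c j * (6 * x ^ 3)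
        - (3 * x ^ 2) * (c j * xs j + c j * x) - (3 * x) * (c j * (xs j) ^ 2 + c j * s2)
        + 3 * ((c j * (xs j) ^ 2) * x + (c j * xs j) * s2)) / 12 := fun j => by ring
  simp only [houter]
  rw [← Finset.sum_div]
  rw [show (1 / 12 : ℝ) * ((∑ j, ∑ k, c j * c k * |xs j - xs k| ^ 3)
      - 2 * ∑ j, c j * |x - xs j| ^ 3)
    = ((∑ j, ∑ k, c j * c k * |xs j - xs k| ^ 3)
      - 2 * ∑ j, c j * |x - xs j| ^ 3) / 12 from by ring]
  congr 1
  have hmul : (∑ j, c j * (∑ k, c k * |xs j - xs k| ^ 3))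
      = ∑ j, ∑ k, c j * c k * |xs j - xs k| ^ 3 := by
    refine Finset.sum_congr rfl fun j _ => ?_
    rw [Finset.mul_sum]
    exact Finset.sum_congr rfl fun k _ => by ring
  simp only [Finset.sum_add_distrib, Finset.sum_sub_distrib, ← Finset.mul_sum,
    ← Finset.sum_mul, hc1, hcx]
  rw [hmul]
  ring
end
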